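/- arXiv:1003.1843 — 2 statements merged into one kernel-verified Lean document; each statement's English description precedes it below -/
import Mathlib

section
/- Let {γ_n}, {a_n}, {b_n} be sequences in PSL(2,ℂ). Suppose {a_n} converges to a loxodromic (hyperbolic) isometry a_∞ and {b_n} converges to a loxodromic isometry b_∞ such that a_∞ and b_∞ have no common fixed point on the sphere at infinity, and suppose the sequences {γ_n a_n γ_n^{-1}} and {γ_n b_n γ_n^{-1}} both converge in PSL(2,ℂ). Then some subsequence of {γ_n} converges in PSL(2,ℂ). -/
/-!
STATEMENT 0.  If sequences `aₙ → a∞`, `bₙ → b∞` in `PSL(2,ℂ)` with `a∞`, `b∞`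
loxodromic without a common fixed point on the sphere at infinity, and the
conjugated sequences `γₙ aₙ γₙ⁻¹`, `γₙ bₙ γₙ⁻¹` both converge, then a
subsequence of `γₙ` converges.

Here `PSL(2,ℂ)` is realized as `SL(2,ℂ)/center`; fixed points on the sphere at
infinity `Ĉ = ℙ¹(ℂ)` correspond to eigenlines of a lift, and an element is
loxodromic iff a lift has an eigenvalue of modulus `> 1`.
-/

open Matrix Filter Topology

abbrev SL2C := Matrix.SpecialLinearGroup (Fin 2) ℂ

noncomputable instance : TopologicalSpace SL2C :=
  show TopologicalSpace {A : Matrix (Fin 2) (Fin 2) ℂ // A.det = 1} from inferInstance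

/-- `PSL(2,ℂ)`, the group of orientation-preserving isometries of `ℍ³`. -/
abbrev PSL2C := SL2C ⧸ Subgroup.center SL2C

/-- `v` is an eigenvector of (the matrix of) `A` with eigenvalue `l`. -/
def SL2C.eigen (A : SL2C) (l : ℂ) (v : Fin 2 → ℂ) : Prop :=
  (A : Matrix (Fin 2) (Fin 2) ℂ).mulVec v = l • v

/-- An element of `PSL(2,ℂ)` is loxodromic (hyperbolic) if some (equivalently,
any) lift to `SL(2,ℂ)` has an eigenvalue of modulus `> 1`: it then has exactly
two fixed points on the sphere at infinity and translates along the geodesic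
joining them. -/
def IsLoxodromic (g : PSL2C) : Prop :=
  ∃ A : SL2C, (A : PSL2C) = g ∧
    ∃ l : ℂ, 1 < ‖l‖ ∧ ∃ v : Fin 2 → ℂ, v ≠ 0 ∧ SL2C.eigen A l v

/-- A nonzero vector `v` represents a fixed point of `g` on the sphere at
infinity `Ĉ = ℙ¹(ℂ)` iff it is an eigenvector of a lift of `g`. -/
def IsFixedDir (g : PSL2C) (v : Fin 2 → ℂ) : Prop :=
  v ≠ 0 ∧ ∃ A : SL2C, (A : PSL2C) = g ∧ ∃ l : ℂ, SL2C.eigen A l v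


/-!
Lift everything to `SL(2,ℂ)`: `γₙ = [gₙ]`, and `gₙ αₙ gₙ⁻¹ = ±Cₙ` with `αₙ → A`, `Cₙ → A'`.
After passing to a subsequence, `gₙ / ‖gₙ‖ → h ≠ 0`. Taking norms in `uₙ αₙ w = ±Cₙ uₙ w`
for `uₙ = gₙ / ‖gₙ‖` and letting `n → ∞` shows that `ker h` is invariant under `A`, and likewise
under `B`. If `det h = 0`, then `ker h` is a line, hence a common eigenline of `A` and `B`, that
is, a common fixed point of `a∞` and `b∞` on the sphere at infinity. So `det h ≠ 0`, and since
`det uₙ = ‖gₙ‖⁻²` the norms `‖gₙ‖` converge, hence so do the `gₙ`.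
-/

theorem IsLocalHomeomorph.exists_tendsto_lift {X Y ι : Type*} [TopologicalSpace X]
    [TopologicalSpace Y] {f : X → Y} (hf : IsLocalHomeomorph f) (hsurj : Function.Surjective f)
    {l : Filter ι} {x : ι → Y} {L : X} (hx : Tendsto x l (𝓝 (f L))) :
    ∃ X' : ι → X, (∀ k, f (X' k) = x k) ∧ Tendsto X' l (𝓝 L) := by
  classical
  obtain ⟨e, hL, rfl⟩ := hf L
  refine ⟨fun k => if x k ∈ e.target then e.symm (x k) else Function.surjInv hsurj (x k),
    fun k => ?_, ?_⟩
  · dsimp only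
    split_ifs with hk
    · exact e.right_inv hk
    · exact Function.surjInv_eq hsurj (x k)
  · have hsymm : Tendsto (e.symm ∘ x) l (𝓝 L) := by
      simpa only [e.left_inv hL] using (e.continuousAt_symm (e.map_source hL)).tendsto.comp hx
    refine hsymm.congr' ?_
    filter_upwards [hx.eventually (e.open_target.mem_nhds (e.map_source hL))] with k hk
    exact (if_pos hk).symm

theorem exists_subseq_tendsto_inv_norm_smul {𝕜 E : Type*} [RCLike 𝕜] [NormedAddCommGroup E]
    [NormedSpace 𝕜 E] [ProperSpace E] {x : ℕ → E} (hx : ∀ k, x k ≠ 0) :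
    ∃ φ : ℕ → ℕ, StrictMono φ ∧ ∃ y ≠ 0,
      Tendsto (fun k => (‖x (φ k)‖ : 𝕜)⁻¹ • x (φ k)) atTop (𝓝 y) := by
  obtain ⟨y, hy, φ, hφ, hlim⟩ := (isCompact_sphere (0 : E) 1).tendsto_subseq
    fun k => mem_sphere_zero_iff_norm.mpr (norm_smul_inv_norm (𝕜 := 𝕜) (hx k))
  exact ⟨φ, hφ, y, ne_zero_of_mem_unit_sphere ⟨y, hy⟩, hlim⟩

namespace Matrix

theorem exists_smul_eq_of_mulVec_eq_zero {K : Type*} [Field K] {h : Matrix (Fin 2) (Fin 2) K}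
    (h0 : h ≠ 0) {v w : Fin 2 → K} (hv : v ≠ 0) (hhv : h *ᵥ v = 0) (hhw : h *ᵥ w = 0) :
    ∃ c : K, c • v = w := by
  have hker : LinearMap.ker (toLin' h) ≠ ⊤ := by
    rwa [Ne, LinearMap.ker_eq_top, LinearEquiv.map_eq_zero_iff]
  have hlt := Submodule.finrank_lt hker
  rw [Module.finrank_fin_fun] at hlt
  have hone : Module.finrank K (LinearMap.ker (toLin' h)) = 1 :=
    le_antisymm (Nat.le_of_lt_succ hlt) <| Submodule.one_le_finrank_iff.mpr <|
      (Submodule.ne_bot_iff _).mpr ⟨v, hhv, hv⟩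
  obtain ⟨c, hc⟩ := (finrank_eq_one_iff_of_nonzero' (⟨v, hhv⟩ : LinearMap.ker (toLin' h))
    fun h0 => hv (congrArg Subtype.val h0)).mp hone ⟨w, hhw⟩
  exact ⟨c, congrArg Subtype.val hc⟩

theorem exists_common_eigenvector_of_det_eq_zero {K : Type*} [Field K]
    {h A B : Matrix (Fin 2) (Fin 2) K} (h0 : h ≠ 0) (hdet : h.det = 0)
    (hA : ∀ w, h *ᵥ w = 0 → h *ᵥ (A *ᵥ w) = 0) (hB : ∀ w, h *ᵥ w = 0 → h *ᵥ (B *ᵥ w) = 0) :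
    ∃ v ≠ 0, (∃ a : K, A *ᵥ v = a • v) ∧ ∃ b : K, B *ᵥ v = b • v := by
  obtain ⟨v, hv, hhv⟩ := exists_mulVec_eq_zero_iff.mpr hdet
  obtain ⟨a, ha⟩ := exists_smul_eq_of_mulVec_eq_zero h0 hv hhv (hA v hhv)
  obtain ⟨b, hb⟩ := exists_smul_eq_of_mulVec_eq_zero h0 hv hhv (hB v hhv)
  exact ⟨v, hv, ⟨a, ha.symm⟩, b, hb.symm⟩

variable {n 𝕜 ι : Type*} [Fintype n] {l : Filter ι}

theorem mulVec_mulVec_eq_zero_of_tendsto [NormedField 𝕜] [l.NeBot] {u α C : ι → Matrix n n 𝕜}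
    {r : ι → 𝕜} {h A C' : Matrix n n 𝕜} (hr : ∀ k, ‖r k‖ = 1)
    (hrel : ∀ k, u k * α k = r k • (C k * u k)) (hu : Tendsto u l (𝓝 h))
    (hα : Tendsto α l (𝓝 A)) (hC : Tendsto C l (𝓝 C')) {w : n → 𝕜} (hw : h *ᵥ w = 0) :
    h *ᵥ (A *ᵥ w) = 0 := by
  have hcont : Continuous fun M : Matrix n n 𝕜 => ‖M *ᵥ w‖ :=
    (continuous_id.matrix_mulVec continuous_const).norm
  have hlhs : Tendsto (fun k => ‖(u k * α k) *ᵥ w‖) l (𝓝 ‖(h * A) *ᵥ w‖) :=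
    (hcont.tendsto _).comp (hu.mul hα)
  have hrhs : Tendsto (fun k => ‖(u k * α k) *ᵥ w‖) l (𝓝 ‖(C' * h) *ᵥ w‖) := by
    refine ((hcont.tendsto _).comp (hC.mul hu)).congr fun k => ?_
    simp only [Function.comp_apply, hrel, smul_mulVec, norm_smul, hr, one_mul]
  rw [mulVec_mulVec, ← norm_eq_zero, tendsto_nhds_unique hlhs hrhs, ← mulVec_mulVec, hw,
    mulVec_zero, norm_zero]

namespace SpecialLinearGroup

variable [DecidableEq n]

theorem isLocalHomeomorph_mk_center {R : Type*} [CommRing R] [IsDomain R] [TopologicalSpace R]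
    [IsTopologicalRing R] [T1Space R] :
    IsLocalHomeomorph (QuotientGroup.mk : SpecialLinearGroup n R → _ ⧸ Subgroup.center _) :=
  have : NeZero (max (Fintype.card n) 1) := ⟨(lt_max_of_lt_right one_pos).ne'⟩
  have : Finite (Subgroup.center (SpecialLinearGroup n R)) :=
    .of_equiv _ center_equiv_rootsOfUnity.toEquiv.symm
  ((Subgroup.center _).isQuotientCoveringMap (Set.toFinite _).isDiscrete).isCoveringMap
    |>.isLocalHomeomorph

theorem exists_tendsto_lift_center {R : Type*} [CommRing R] [IsDomain R] [TopologicalSpace R]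
    [IsTopologicalRing R] [T1Space R] {x : ι → SpecialLinearGroup n R ⧸ Subgroup.center _}
    {y : SpecialLinearGroup n R ⧸ Subgroup.center _} (hx : Tendsto x l (𝓝 y)) :
    ∃ Y : SpecialLinearGroup n R, (Y : _ ⧸ Subgroup.center _) = y ∧
      ∃ X : ι → SpecialLinearGroup n R, (∀ k, (X k : _ ⧸ Subgroup.center _) = x k) ∧
        Tendsto X l (𝓝 Y) := by
  obtain ⟨Y, rfl⟩ := QuotientGroup.mk_surjective y
  exact ⟨Y, rfl, isLocalHomeomorph_mk_center.exists_tendsto_lift QuotientGroup.mk_surjective hx⟩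

theorem exists_eq_smul_of_mk_eq {R : Type*} [CommRing R] {A B : SpecialLinearGroup n R}
    (hAB : (A : SpecialLinearGroup n R ⧸ Subgroup.center _) = B) :
    ∃ r : R, r ^ Fintype.card n = 1 ∧ (A : Matrix n n R) = r • (B : Matrix n n R) := by
  obtain ⟨r, hr, hscalar⟩ := mem_center_iff.mp (QuotientGroup.eq.mp hAB.symm)
  refine ⟨r, hr, ?_⟩
  calc (A : Matrix n n R) = ((B * (B⁻¹ * A) : SpecialLinearGroup n R) : Matrix n n R) := by
        rw [mul_inv_cancel_left]
    _ = r • (B : Matrix n n R) := by rw [coe_mul, ← hscalar, scalar_apply, smul_eq_mul_diagonal]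

theorem mulVec_mulVec_eq_zero_of_tendsto_conj [NormedField 𝕜] [Nonempty n] [l.NeBot]
    {g α C : ι → SpecialLinearGroup n 𝕜} {A C' : SpecialLinearGroup n 𝕜} {c : ι → 𝕜}
    {h : Matrix n n 𝕜}
    (hconj : ∀ k, ((g k * α k * (g k)⁻¹ : SpecialLinearGroup n 𝕜) :
      SpecialLinearGroup n 𝕜 ⧸ Subgroup.center (SpecialLinearGroup n 𝕜)) = C k)
    (hα : Tendsto α l (𝓝 A)) (hC : Tendsto C l (𝓝 C'))
    (hu : Tendsto (fun k => c k • (g k : Matrix n n 𝕜)) l (𝓝 h)) {w : n → 𝕜}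
    (hw : h *ᵥ w = 0) : h *ᵥ ((A : Matrix n n 𝕜) *ᵥ w) = 0 := by
  choose r hr hrel using fun k => exists_eq_smul_of_mk_eq (hconj k)
  have hα' : Tendsto (fun k => (α k : Matrix n n 𝕜)) l (𝓝 A) :=
    (continuous_subtype_val.tendsto _).comp hα
  have hC' : Tendsto (fun k => (C k : Matrix n n 𝕜)) l (𝓝 C') :=
    (continuous_subtype_val.tendsto _).comp hC
  refine mulVec_mulVec_eq_zero_of_tendsto (r := r) (fun k => ?_) (fun k => ?_) hu hα' hC' hw
  · exact (pow_eq_one_iff_of_nonneg (norm_nonneg _) Fintype.card_ne_zero).mp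
      (by rw [← norm_pow, hr k, norm_one])
  · have hrel' : (g k : Matrix n n 𝕜) * α k = r k • ((C k : Matrix n n 𝕜) * g k) :=
      calc (g k : Matrix n n 𝕜) * α k = ((g k * α k * (g k)⁻¹ * g k : SpecialLinearGroup n 𝕜) :
            Matrix n n 𝕜) := by rw [inv_mul_cancel_right, coe_mul]
        _ = r k • ((C k : Matrix n n 𝕜) * g k) := by rw [coe_mul, hrel k, smul_mul_assoc]
    rw [smul_mul_assoc, hrel', mul_smul_comm, smul_comm]

theorem exists_tendsto_of_tendsto_inv_smul [RCLike 𝕜] [Nonempty n] [l.NeBot]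
    {g : ι → SpecialLinearGroup n 𝕜} {c : ι → ℝ} (hc : ∀ k, 0 < c k) {h : Matrix n n 𝕜}
    (hh : h.det ≠ 0) (hu : Tendsto (fun k => (c k : 𝕜)⁻¹ • (g k : Matrix n n 𝕜)) l (𝓝 h)) :
    ∃ G : SpecialLinearGroup n 𝕜, Tendsto g l (𝓝 G) := by
  set d := Fintype.card n
  have hd : d ≠ 0 := Fintype.card_ne_zero
  have hnorm_det : ∀ k, ‖((c k : 𝕜)⁻¹ • (g k : Matrix n n 𝕜)).det‖ = (c k)⁻¹ ^ d := by
    intro k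
    rw [det_smul, (g k).det_coe, mul_one, norm_pow, norm_inv, RCLike.norm_ofReal,
      abs_of_pos (hc k)]
  -- `c k` is read off from the determinant of the normalized matrix.
  have hc_inv : Tendsto (fun k => (c k)⁻¹) l (𝓝 (‖h.det‖ ^ (d⁻¹ : ℝ))) := by
    refine (((continuous_id.matrix_det.norm.tendsto h).comp hu).rpow_const
      (Or.inr (by positivity))).congr fun k => ?_
    simp only [Function.comp_apply, id, hnorm_det,
      Real.pow_rpow_inv_natCast (inv_nonneg.2 (hc k).le) hd]
  have hρ : ‖h.det‖ ^ (d⁻¹ : ℝ) ≠ 0 := (Real.rpow_pos_of_pos (norm_pos_iff.2 hh) _).ne'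
  have hg : Tendsto (fun k => (g k : Matrix n n 𝕜)) l
      (𝓝 ((((‖h.det‖ ^ (d⁻¹ : ℝ))⁻¹ : ℝ) : 𝕜) • h)) := by
    refine (((RCLike.continuous_ofReal.tendsto _).comp (hc_inv.inv₀ hρ)).smul hu).congr
      fun k => ?_
    simp [smul_smul, (hc k).ne']
  have hdet : ((((‖h.det‖ ^ (d⁻¹ : ℝ))⁻¹ : ℝ) : 𝕜) • h).det = 1 :=
    tendsto_nhds_unique ((continuous_id.matrix_det.tendsto _).comp hg)
      (by simp [Function.comp_def])
  exact ⟨⟨_, hdet⟩, tendsto_subtype_rng.mpr hg⟩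

end SpecialLinearGroup

end Matrix

-- Any norm on `Matrix (Fin 2) (Fin 2) ℂ` serves for the normalization `gₙ / ‖gₙ‖`.
attribute [local instance] Matrix.normedAddCommGroup Matrix.normedSpace

theorem psl2c_subconvergence_of_conjugations_converge_general
    (γ a b : ℕ → PSL2C) (ainf binf : PSL2C)
    (ha : Tendsto a atTop (𝓝 ainf)) (hb : Tendsto b atTop (𝓝 binf))
    (hnofix : ¬ ∃ v : Fin 2 → ℂ, IsFixedDir ainf v ∧ IsFixedDir binf v)
    (hca : ∃ A : PSL2C, Tendsto (fun n => γ n * a n * (γ n)⁻¹) atTop (𝓝 A))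
    (hcb : ∃ B : PSL2C, Tendsto (fun n => γ n * b n * (γ n)⁻¹) atTop (𝓝 B)) :
    ∃ φ : ℕ → ℕ, StrictMono φ ∧ ∃ ginf : PSL2C,
      Tendsto (γ ∘ φ) atTop (𝓝 ginf) := by
  obtain ⟨A, rfl, α, hαa, hα⟩ := SpecialLinearGroup.exists_tendsto_lift_center ha
  obtain ⟨B, rfl, β, hβb, hβ⟩ := SpecialLinearGroup.exists_tendsto_lift_center hb
  obtain ⟨_, -, C, hCc, hC⟩ := SpecialLinearGroup.exists_tendsto_lift_center hca.choose_spec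
  obtain ⟨_, -, D, hDc, hD⟩ := SpecialLinearGroup.exists_tendsto_lift_center hcb.choose_spec
  choose g hg using fun n => QuotientGroup.mk_surjective (γ n)
  have hg0 : ∀ n, (g n : Matrix (Fin 2) (Fin 2) ℂ) ≠ 0 := fun n h0 =>
    (g n).det_ne_zero (by simp [h0])
  obtain ⟨φ, hφ, h, hh, hu⟩ := exists_subseq_tendsto_inv_norm_smul (𝕜 := ℂ) hg0
  have hA : ∀ w, h *ᵥ w = 0 → h *ᵥ ((A : Matrix (Fin 2) (Fin 2) ℂ) *ᵥ w) = 0 := fun w =>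
    SpecialLinearGroup.mulVec_mulVec_eq_zero_of_tendsto_conj (fun k => by simp [hg, hαa, hCc])
      (hα.comp hφ.tendsto_atTop) (hC.comp hφ.tendsto_atTop) hu
  have hB : ∀ w, h *ᵥ w = 0 → h *ᵥ ((B : Matrix (Fin 2) (Fin 2) ℂ) *ᵥ w) = 0 := fun w =>
    SpecialLinearGroup.mulVec_mulVec_eq_zero_of_tendsto_conj (fun k => by simp [hg, hβb, hDc])
      (hβ.comp hφ.tendsto_atTop) (hD.comp hφ.tendsto_atTop) hu
  have hdet : h.det ≠ 0 := fun hdet => hnofix <| by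
    obtain ⟨v, hv, ⟨a, hav⟩, b, hbv⟩ := exists_common_eigenvector_of_det_eq_zero hh hdet hA hB
    exact ⟨v, ⟨hv, A, rfl, a, hav⟩, hv, B, rfl, b, hbv⟩
  obtain ⟨G, hG⟩ := SpecialLinearGroup.exists_tendsto_of_tendsto_inv_smul
    (fun k => norm_pos_iff.mpr (hg0 (φ k))) hdet hu
  exact ⟨φ, hφ, G, ((QuotientGroup.continuous_mk.tendsto G).comp hG).congr fun k => hg (φ k)⟩

theorem psl2c_subconvergence_of_conjugations_converge
    (γ a b : ℕ → PSL2C) (ainf binf : PSL2C)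
    (ha : Tendsto a atTop (𝓝 ainf)) (hb : Tendsto b atTop (𝓝 binf))
    (hlaxa : IsLoxodromic ainf) (hlaxb : IsLoxodromic binf)
    (hnofix : ¬ ∃ v : Fin 2 → ℂ, IsFixedDir ainf v ∧ IsFixedDir binf v)
    (hca : ∃ A : PSL2C, Tendsto (fun n => γ n * a n * (γ n)⁻¹) atTop (𝓝 A))
    (hcb : ∃ B : PSL2C, Tendsto (fun n => γ n * b n * (γ n)⁻¹) atTop (𝓝 B)) :
    ∃ φ : ℕ → ℕ, StrictMono φ ∧ ∃ ginf : PSL2C,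
      Tendsto (γ ∘ φ) atTop (𝓝 ginf) :=
  psl2c_subconvergence_of_conjugations_converge_general γ a b ainf binf ha hb hnofix hca hcb
end

section
/- The area of any geodesic triangle in the hyperbolic plane is strictly less than the length of each of its edges (provided the edge has positive length). -/
/-!
Write `A = cosh a`, `B = cosh b`, `C = cosh c`. The laws of cosines give the cosines of the
angles, and the law of sines they imply gives the sines, so
`cos (α + β + γ) * (sinh a * sinh b * sinh c) ^ 2` is a polynomial in `A, B, C`. A factorisation
of that polynomial shows that the defect `δ = π - (α + β + γ)` satisfies
`(1 + A) * cos δ ≥ 3 - A`. On the other hand `cos a * (1 + A) < 3 - A` for `0 < a ≤ π`: halving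
the angle, this is `cos x * cosh x < 1` on `(0, π / 2]`. As `cos` decreases on `[0, π]`, `δ < a`.
-/

open Real

namespace Real

lemma sinh_le_mul_cosh {x : ℝ} (hx : 0 ≤ x) : sinh x ≤ x * cosh x := by
  rcases hx.eq_or_lt with rfl | hx
  · simp
  obtain ⟨ξ, hξ, hslope⟩ := exists_deriv_eq_slope sinh hx continuous_sinh.continuousOn
    differentiable_sinh.differentiableOn
  rw [deriv_sinh, sinh_zero, sub_zero, sub_zero, eq_div_iff hx.ne'] at hslope
  have hcosh : cosh ξ ≤ cosh x := cosh_le_cosh.mpr <| by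
    rw [abs_of_pos hξ.1, abs_of_pos hx]; exact hξ.2.le
  nlinarith

lemma strictAntiOn_cos_mul_cosh : StrictAntiOn (fun x ↦ cos x * cosh x) (Set.Icc 0 (π / 2)) := by
  refine strictAntiOn_of_deriv_neg (convex_Icc _ _) (by fun_prop) fun x hx ↦ ?_
  rw [interior_Icc] at hx
  have hderiv : deriv (fun x ↦ cos x * cosh x) x = cos x * sinh x - sin x * cosh x :=
    ((hasDerivAt_cos x).mul (hasDerivAt_cosh x)).deriv.trans (by ring)
  have hcos : 0 < cos x := cos_pos_of_mem_Ioo ⟨by linarith [pi_pos, hx.1], hx.2⟩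
  -- `tanh x ≤ x < tan x`
  have htan : x * cos x < sin x := by
    have := lt_tan hx.1 hx.2
    rwa [tan_eq_sin_div_cos, lt_div_iff₀ hcos] at this
  rw [hderiv]
  nlinarith [cosh_pos x, mul_le_mul_of_nonneg_left (sinh_le_mul_cosh hx.1.le) hcos.le,
    mul_lt_mul_of_pos_right htan (cosh_pos x)]

lemma cos_mul_cosh_lt_one {x : ℝ} (h0 : 0 < x) (hx : x ≤ π / 2) : cos x * cosh x < 1 := by
  simpa using strictAntiOn_cos_mul_cosh ⟨le_rfl, by positivity⟩ ⟨h0.le, hx⟩ h0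

lemma cos_mul_one_add_cosh_lt {x : ℝ} (h0 : 0 < x) (hx : x ≤ π) :
    cos x * (1 + cosh x) < 3 - cosh x := by
  have hlt := cos_mul_cosh_lt_one (x := x / 2) (by positivity) (by linarith)
  have hcos : 0 ≤ cos (x / 2) := cos_nonneg_of_mem_Icc ⟨by linarith [pi_pos], by linarith⟩
  have hcos2 := cos_sq (x / 2)
  have hcosh2 := cosh_two_mul (x / 2)
  rw [mul_div_cancel₀ x two_ne_zero] at hcos2 hcosh2
  nlinarith [cosh_sq (x / 2), mul_nonneg hcos (cosh_pos (x / 2)).le]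

end Real

lemma three_sub_mul_le_of_one_le {x y z : ℝ} (hx : 1 ≤ x) (hy : 1 ≤ y) (hz : 1 ≤ z) :
    (3 - x) * ((x ^ 2 - 1) * (y ^ 2 - 1) * (z ^ 2 - 1))
      ≤ (1 + x) * ((1 - x ^ 2 - y ^ 2 - z ^ 2 + 2 * x * y * z)
            * ((y * z - x) + (z * x - y) + (x * y - z))
          - (y * z - x) * (z * x - y) * (x * y - z)) := by
  have hfactor : (1 + x) * ((1 - x ^ 2 - y ^ 2 - z ^ 2 + 2 * x * y * z)
            * ((y * z - x) + (z * x - y) + (x * y - z))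
          - (y * z - x) * (z * x - y) * (x * y - z))
        - (3 - x) * ((x ^ 2 - 1) * (y ^ 2 - 1) * (z ^ 2 - 1))
      = (1 + x) * (x - 1) * (y - 1) * (z - 1)
          * ((y - z) ^ 2 + (x - 1) * (x + 2 * y + 2 * z + 3)) := by
    ring
  have : 0 ≤ (1 + x) * (x - 1) * (y - 1) * (z - 1)
      * ((y - z) ^ 2 + (x - 1) * (x + 2 * y + 2 * z + 3)) := by
    have : 0 ≤ x - 1 := by linarith
    have : 0 ≤ y - 1 := by linarith
    have : 0 ≤ z - 1 := by linarith
    have : 0 ≤ x + 2 * y + 2 * z + 3 := by linarith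
    positivity
  linarith

section HyperbolicTriangle

variable {a b c α β γ : ℝ}

lemma sq_sinh_mul_sinh_mul_sin
    (law : cosh a = cosh b * cosh c - sinh b * sinh c * cos α) :
    (sinh b * sinh c * sin α) ^ 2
      = 1 - cosh a ^ 2 - cosh b ^ 2 - cosh c ^ 2 + 2 * cosh a * cosh b * cosh c := by
  linear_combination sinh b ^ 2 * sinh c ^ 2 * sin_sq_add_cos_sq α
    - (sinh b * sinh c * cos α + cosh b * cosh c - cosh a) * law
    + (cosh c ^ 2 - 1) * sinh_sq b + sinh b ^ 2 * sinh_sq c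

lemma sinh_mul_sinh_mul_sin_eq (ha : 0 ≤ a) (hb : 0 ≤ b) (hc : 0 ≤ c)
    (hα : 0 ≤ α) (hα' : α ≤ π) (hβ : 0 ≤ β) (hβ' : β ≤ π)
    (lawA : cosh a = cosh b * cosh c - sinh b * sinh c * cos α)
    (lawB : cosh b = cosh c * cosh a - sinh c * sinh a * cos β) :
    sinh c * sinh a * sin β = sinh b * sinh c * sin α := by
  have hsinh {x : ℝ} (hx : 0 ≤ x) : 0 ≤ sinh x := sinh_nonneg_iff.mpr hx
  refine (pow_left_inj₀ ?_ ?_ two_ne_zero).mp ?_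
  · exact mul_nonneg (mul_nonneg (hsinh hc) (hsinh ha)) (sin_nonneg_of_nonneg_of_le_pi hβ hβ')
  · exact mul_nonneg (mul_nonneg (hsinh hb) (hsinh hc)) (sin_nonneg_of_nonneg_of_le_pi hα hα')
  · rw [sq_sinh_mul_sinh_mul_sin lawB, sq_sinh_mul_sinh_mul_sin lawA]
    ring

lemma three_sub_cosh_le_neg_mul_cos_add_add (ha : 0 < a) (hb : 0 < b) (hc : 0 < c)
    (hα : 0 ≤ α) (hβ : 0 ≤ β) (hγ : 0 ≤ γ) (hα' : α ≤ π) (hβ' : β ≤ π) (hγ' : γ ≤ π)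
    (lawA : cosh a = cosh b * cosh c - sinh b * sinh c * cos α)
    (lawB : cosh b = cosh c * cosh a - sinh c * sinh a * cos β)
    (lawC : cosh c = cosh a * cosh b - sinh a * sinh b * cos γ) :
    3 - cosh a ≤ -((1 + cosh a) * cos (α + β + γ)) := by
  have sinesB := sinh_mul_sinh_mul_sin_eq ha.le hb.le hc.le hα hα' hβ hβ' lawA lawB
  have sinesC := sinh_mul_sinh_mul_sin_eq hb.le hc.le ha.le hβ hβ' hγ hγ' lawB lawC
  have hS := sq_sinh_mul_sinh_mul_sin lawA
  set A := cosh a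
  set B := cosh b
  set C := cosh c
  set S := sinh b * sinh c * sin α
  have hE : (sinh a * sinh b * sinh c) ^ 2 = (A ^ 2 - 1) * (B ^ 2 - 1) * (C ^ 2 - 1) := by
    rw [mul_pow, mul_pow, sinh_sq, sinh_sq, sinh_sq]
  have hEpos : 0 < (sinh a * sinh b * sinh c) ^ 2 := by
    have := sinh_pos_iff.mpr ha
    have := sinh_pos_iff.mpr hb
    have := sinh_pos_iff.mpr hc
    positivity
  have hcos : cos (α + β + γ) * (sinh a * sinh b * sinh c) ^ 2
      = (B * C - A) * (C * A - B) * (A * B - C)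
        - (1 - A ^ 2 - B ^ 2 - C ^ 2 + 2 * A * B * C)
          * ((B * C - A) + (C * A - B) + (A * B - C)) := by
    have cosinesA : sinh b * sinh c * cos α = B * C - A := by linarith
    have cosinesB : sinh c * sinh a * cos β = C * A - B := by linarith
    have cosinesC : sinh a * sinh b * cos γ = A * B - C := by linarith
    calc cos (α + β + γ) * (sinh a * sinh b * sinh c) ^ 2
        = (sinh b * sinh c * cos α) * (sinh c * sinh a * cos β) * (sinh a * sinh b * cos γ)
          - (sinh b * sinh c * cos α) * (sinh c * sinh a * sin β) * (sinh a * sinh b * sin γ)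
          - S * (sinh c * sinh a * cos β) * (sinh a * sinh b * sin γ)
          - S * (sinh c * sinh a * sin β) * (sinh a * sinh b * cos γ) := by
          rw [cos_add, cos_add, sin_add]
          ring
      _ = _ := by
          rw [cosinesA, cosinesB, cosinesC, sinesC, sinesB]
          linear_combination (-((B * C - A) + (C * A - B) + (A * B - C))) * hS
  have hpoly := three_sub_mul_le_of_one_le (one_le_cosh a) (one_le_cosh b) (one_le_cosh c)
  rw [← hE] at hpoly
  refine le_of_mul_le_mul_right (hpoly.trans_eq ?_) hEpos
  linear_combination (1 + A) * hcos

lemma pi_sub_add_add_lt (ha : 0 < a) (hb : 0 < b) (hc : 0 < c)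
    (hα : 0 ≤ α) (hβ : 0 ≤ β) (hγ : 0 ≤ γ) (hα' : α ≤ π) (hβ' : β ≤ π) (hγ' : γ ≤ π)
    (lawA : cosh a = cosh b * cosh c - sinh b * sinh c * cos α)
    (lawB : cosh b = cosh c * cosh a - sinh c * sinh a * cos β)
    (lawC : cosh c = cosh a * cosh b - sinh a * sinh b * cos γ) :
    π - (α + β + γ) < a := by
  by_contra! h
  have haπ : a ≤ π := h.trans (by linarith)
  have hcos_le : cos (π - (α + β + γ)) ≤ cos a :=
    strictAntiOn_cos.antitoneOn ⟨ha.le, haπ⟩ ⟨ha.le.trans h, by linarith⟩ h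
  rw [cos_pi_sub] at hcos_le
  have := mul_le_mul_of_nonneg_left hcos_le (by linarith [one_le_cosh a] : 0 ≤ 1 + cosh a)
  linarith [cos_mul_one_add_cosh_lt ha haπ,
    three_sub_cosh_le_neg_mul_cos_add_add ha hb hc hα hβ hγ hα' hβ' hγ' lawA lawB lawC]

end HyperbolicTriangle

theorem hyperbolic_triangle_area_lt_side_lengths
    (a b c α β γ : ℝ)
    (ha : 0 < a) (hb : 0 < b) (hc : 0 < c)
    (hα : 0 ≤ α) (hβ : 0 ≤ β) (hγ : 0 ≤ γ)
    (hα' : α ≤ π) (hβ' : β ≤ π) (hγ' : γ ≤ π)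
    (lawA : Real.cosh a = Real.cosh b * Real.cosh c - Real.sinh b * Real.sinh c * Real.cos α)
    (lawB : Real.cosh b = Real.cosh c * Real.cosh a - Real.sinh c * Real.sinh a * Real.cos β)
    (lawC : Real.cosh c = Real.cosh a * Real.cosh b - Real.sinh a * Real.sinh b * Real.cos γ) :
    π - (α + β + γ) < a ∧ π - (α + β + γ) < b ∧ π - (α + β + γ) < c := by
  refine ⟨pi_sub_add_add_lt ha hb hc hα hβ hγ hα' hβ' hγ' lawA lawB lawC, ?_, ?_⟩
  · convert pi_sub_add_add_lt hb hc ha hβ hγ hα hβ' hγ' hα' lawB lawC lawA using 2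
    ring
  · convert pi_sub_add_add_lt hc ha hb hγ hα hβ hγ' hα' hβ' lawC lawA lawB using 2
    ring
end
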